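/- arXiv:math/0309011 — 2 statements merged into one kernel-verified Lean document; each statement's English description precedes it below -/
import Mathlib

section
/- For any vectors α_1, …, α_n ∈ 𝕋^d and any k ≥ 1, there exists a nonzero h ∈ ℤ^d with ‖h‖_∞ ≤ (2π²kd·25/(2π²))^{n/(2d)} = (25kd)^{n/(2d)} such that (2π²k/n)·∑_{j=1}^n {h·α_j}² < 2π²/25 < 1, and hence Q̂(h)^k ≥ 1 − 2π²/25. -/
open Real Set

/-- Distance from a real number to the nearest integer. -/
noncomputable def intDist (x : ℝ) : ℝ := |x - round x|


lemma intDist_nonneg (x : ℝ) : 0 ≤ intDist x := abs_nonneg _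

lemma intDist_le_abs_sub_int (x : ℝ) (m : ℤ) : intDist x ≤ |x - m| := by
  unfold intDist
  by_cases h : m = round x
  · rw [h]
  · have h1 : (1 : ℝ) ≤ |(m : ℝ) - round x| := by
      have : (1 : ℤ) ≤ |m - round x| := Int.one_le_abs (sub_ne_zero.mpr h)
      calc (1:ℝ) ≤ ((|m - round x| : ℤ) : ℝ) := by exact_mod_cast this
        _ = |(m : ℝ) - round x| := by push_cast; ring_nf
    have h2 : |x - round x| ≤ 1 / 2 := abs_sub_round x
    have h3 : |(m : ℝ) - round x| ≤ |(m : ℝ) - x| + |x - round x| := abs_sub_le _ _ _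
    have h4 : |(m : ℝ) - x| = |x - m| := abs_sub_comm _ _
    linarith

lemma intDist_le_abs (x : ℝ) : intDist x ≤ |x| := by
  simpa using intDist_le_abs_sub_int x 0

lemma intDist_add_int (x : ℝ) (m : ℤ) : intDist (x + m) = intDist x := by
  apply le_antisymm
  · calc intDist (x + m) ≤ |x + m - (round x + m : ℤ)| := intDist_le_abs_sub_int _ _
      _ = |x - round x| := by push_cast; ring_nf
    
  · calc intDist x ≤ |x - (round (x + (m:ℝ)) - m : ℤ)| := intDist_le_abs_sub_int _ _
      _ = |x + m - round (x + (m:ℝ))| := by push_cast; ring_nf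
      _ = intDist (x + m) := rfl

lemma intDist_neg (x : ℝ) : intDist (-x) = intDist x := by
  apply le_antisymm
  · calc intDist (-x) ≤ |-x - (-round x : ℤ)| := intDist_le_abs_sub_int _ _
      _ = |x - round x| := by push_cast; rw [← abs_neg]; ring_nf
  · calc intDist x ≤ |x - (-round (-x) : ℤ)| := intDist_le_abs_sub_int _ _
      _ = |-x - round (-x)| := by push_cast; rw [← abs_neg]; ring_nf
      _ = intDist (-x) := rfl

lemma intDist_add_le (x y : ℝ) : intDist (x + y) ≤ intDist x + intDist y := by
  calc intDist (x + y) ≤ |x + y - (round x + round y : ℤ)| := intDist_le_abs_sub_int _ _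
    _ = |(x - round x) + (y - round y)| := by push_cast; ring_nf
    _ ≤ |x - round x| + |y - round y| := abs_add_le _ _
    _ = intDist x + intDist y := rfl

lemma cos_two_pi_ge (y : ℝ) : 1 - 2 * π ^ 2 * intDist y ^ 2 ≤ Real.cos (2 * π * y) := by
  have h1 : Real.cos (2 * π * y) = Real.cos (2 * π * (y - round y)) := by
    rw [show 2 * π * y = 2 * π * (y - round y) + (round y : ℤ) * (2 * π) by ring]
    exact Real.cos_add_int_mul_two_pi _ _
  have h2 := Real.one_sub_sq_div_two_le_cos (x := 2 * π * (y - round y))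
  have h3 : (2 * π * (y - round y)) ^ 2 = 4 * π ^ 2 * (y - round y) ^ 2 := by ring
  have h4 : (y - round y) ^ 2 = intDist y ^ 2 := (sq_abs _).symm
  rw [h1]
  nlinarith [h2]

noncomputable def Fset (s β : ℝ) : Set ℝ :=
  if Int.fract β < s then Ioo 0 (Int.fract β + s) ∪ Ioo (Int.fract β + 1 - s) 1
  else if 1 - s < Int.fract β then Ioo 0 (Int.fract β - 1 + s) ∪ Ioo (Int.fract β - s) 1
  else Ioo (Int.fract β - s) (Int.fract β + s)

lemma measurableSet_Fset (s β : ℝ) : MeasurableSet (Fset s β) := by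
  unfold Fset
  split_ifs <;> measurability

lemma Fset_subset_Ico {s : ℝ} (hs : 0 < s) (hs2 : s ≤ 1/2) (β : ℝ) :
    Fset s β ⊆ Ico (0:ℝ) 1 := by
  have h0 := Int.fract_nonneg β
  have h1 := Int.fract_lt_one β
  unfold Fset
  split_ifs with c1 c2 <;> intro t ht
  · rcases ht with ht | ht
    · exact ⟨le_of_lt ht.1, by linarith [ht.2]⟩
    · exact ⟨by linarith [ht.1], ht.2⟩
  · rcases ht with ht | ht
    · exact ⟨le_of_lt ht.1, by linarith [ht.2]⟩
    · exact ⟨by linarith [ht.1], ht.2⟩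
  · exact ⟨by linarith [ht.1], by linarith [ht.2]⟩

lemma volume_Fset {s : ℝ} (hs : 0 < s) (hs2 : s ≤ 1/2) (β : ℝ) :
    MeasureTheory.volume (Fset s β) = ENNReal.ofReal (2 * s) := by
  have h0 := Int.fract_nonneg β
  have h1 := Int.fract_lt_one β
  set γ := Int.fract β with hγ
  unfold Fset
  split_ifs with c1 c2
  · rw [MeasureTheory.measure_union (by
      apply Set.Ioo_disjoint_Ioo.mpr
      exact le_trans (min_le_left _ _) (le_trans (by linarith) (le_max_right _ _))) measurableSet_Ioo]
    rw [Real.volume_Ioo, Real.volume_Ioo, ← ENNReal.ofReal_add (by linarith) (by linarith)]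
    congr 1; ring
  · rw [MeasureTheory.measure_union (by
      apply Set.Ioo_disjoint_Ioo.mpr
      exact le_trans (min_le_left _ _) (le_trans (by linarith) (le_max_right _ _))) measurableSet_Ioo]
    rw [Real.volume_Ioo, Real.volume_Ioo, ← ENNReal.ofReal_add (by linarith) (by linarith)]
    congr 1; ring
  · rw [Real.volume_Ioo]; congr 1; ring

lemma mem_Fset_intDist {s : ℝ} (hs : 0 < s) (hs2 : s ≤ 1/2) {β t : ℝ}
    (ht : t ∈ Fset s β) : intDist (t - β) < s := by
  have h0 := Int.fract_nonneg β
  have h1 := Int.fract_lt_one β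
  set γ := Int.fract β with hγ
  have hb : t - β = t - γ + (-⌊β⌋ : ℤ) := by
    rw [hγ]; push_cast; rw [Int.fract]; ring
  rw [hb, intDist_add_int]
  unfold Fset at ht
  rw [← hγ] at ht
  split_ifs at ht with c1 c2
  · rcases ht with ht | ht
    · calc intDist (t - γ) ≤ |t - γ| := intDist_le_abs _
        _ < s := by rw [abs_lt]; constructor <;> [linarith [ht.1]; linarith [ht.2]]
    · calc intDist (t - γ) ≤ |t - γ - (1:ℤ)| := intDist_le_abs_sub_int _ _
        _ < s := by push_cast; rw [abs_lt]; constructor <;> [linarith [ht.1]; linarith [ht.2]]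
  · rcases ht with ht | ht
    · calc intDist (t - γ) ≤ |t - γ - (-1:ℤ)| := intDist_le_abs_sub_int _ _
        _ < s := by push_cast; rw [abs_lt]; constructor <;> [linarith [ht.1]; linarith [ht.2]]
    · calc intDist (t - γ) ≤ |t - γ| := intDist_le_abs _
        _ < s := by rw [abs_lt]; constructor <;> [linarith [ht.1]; linarith [ht.2]]
  · calc intDist (t - γ) ≤ |t - γ| := intDist_le_abs _
      _ < s := by rw [abs_lt]; constructor <;> [linarith [ht.1]; linarith [ht.2]]

lemma tail_lemma (n k : ℕ) (hn : 0 < n) (hk : 1 ≤ k) (y : Fin n → ℝ)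
    (hy : ∀ j, intDist (y j) < 1 / (5 * Real.sqrt k)) :
    (2 * π ^ 2 * k / n) * ∑ j, (intDist (y j)) ^ 2 < 2 * π ^ 2 / 25 ∧
    2 * π ^ 2 / 25 < 1 ∧
    (((1 : ℝ) / n) * ∑ j, Real.cos (2 * π * y j)) ^ k ≥ 1 - 2 * π ^ 2 / 25 := by
  have hk0 : (1:ℝ) ≤ (k:ℝ) := by exact_mod_cast hk
  have hn0 : (1:ℝ) ≤ (n:ℝ) := by exact_mod_cast hn
  have hπ : 0 < π := Real.pi_pos
  have hsqk : 1 ≤ Real.sqrt k := Real.one_le_sqrt.mpr hk0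
  have hεsq : (1 / (5 * Real.sqrt k) : ℝ)^2 = 1 / (25 * k) := by
    rw [div_pow, mul_pow, Real.sq_sqrt (by positivity : (0:ℝ) ≤ (k:ℝ))]
    norm_num
  have hNe : (Finset.univ : Finset (Fin n)).Nonempty := by
    have : Nonempty (Fin n) := ⟨⟨0, hn⟩⟩
    exact Finset.univ_nonempty
  have hS0 : 0 ≤ ∑ j, (intDist (y j)) ^ 2 := Finset.sum_nonneg fun j _ => sq_nonneg _
  have hsumD : ∑ j, (intDist (y j)) ^ 2 < (n : ℝ) / (25 * k) := by
    have step : ∑ j, (intDist (y j)) ^ 2 < ∑ _j : Fin n, (1 / (5 * Real.sqrt k) : ℝ) ^ 2 := by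
      apply Finset.sum_lt_sum_of_nonempty hNe
      intro j _
      have h1 := hy j
      have h0 := intDist_nonneg (y j)
      nlinarith
    calc ∑ j, (intDist (y j)) ^ 2 < ∑ _j : Fin n, (1 / (5 * Real.sqrt k) : ℝ) ^ 2 := step
      _ = (n : ℝ) * (1 / (5 * Real.sqrt k) : ℝ) ^ 2 := by
          rw [Finset.sum_const, Finset.card_univ, Fintype.card_fin, nsmul_eq_mul]
      _ = (n : ℝ) / (25 * k) := by rw [hεsq]; field_simp
  have hc : (0:ℝ) < 2 * π ^ 2 * k / n := by positivity
  have hnne : (n:ℝ) ≠ 0 := by linarith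
  have hkne : (k:ℝ) ≠ 0 := by linarith
  have hfirst : (2 * π ^ 2 * k / n) * ∑ j, (intDist (y j)) ^ 2 < 2 * π ^ 2 / 25 := by
    calc (2 * π ^ 2 * k / n) * ∑ j, (intDist (y j)) ^ 2
        < (2 * π ^ 2 * k / n) * ((n : ℝ) / (25 * k)) := mul_lt_mul_of_pos_left hsumD hc
      _ = 2 * π ^ 2 / 25 := by field_simp
  have hsecond : 2 * π ^ 2 / 25 < 1 := by nlinarith [Real.pi_lt_d2, Real.pi_pos]
  refine ⟨hfirst, hsecond, ?_⟩
  have hA0 : 0 ≤ (2 * π ^ 2 * k / n) * ∑ j, (intDist (y j)) ^ 2 := mul_nonneg (le_of_lt hc) hS0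
  set A : ℝ := (2 * π ^ 2 * k / n) * ∑ j, (intDist (y j)) ^ 2 with hAdef
  have hA1 : A < 1 := lt_trans hfirst hsecond
  have hAk : A / k = 2 * π ^ 2 * (∑ j, (intDist (y j)) ^ 2) / n := by
    rw [hAdef]; field_simp
  have hAk2 : A / k ≤ A := div_le_self hA0 hk0
  have hbase : 1 - A / k ≤ (1 / n) * ∑ j, Real.cos (2 * π * y j) := by
    have hcos : (n:ℝ) - 2 * π ^ 2 * ∑ j, (intDist (y j)) ^ 2 ≤ ∑ j, Real.cos (2 * π * y j) := by
      calc (n:ℝ) - 2 * π ^ 2 * ∑ j, (intDist (y j)) ^ 2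
          = ∑ _j : Fin n, (1:ℝ) - ∑ j, 2 * π ^ 2 * (intDist (y j)) ^ 2 := by
            rw [Finset.sum_const, Finset.card_univ, Fintype.card_fin, nsmul_eq_mul, mul_one,
              ← Finset.mul_sum]
        _ = ∑ j, (1 - 2 * π ^ 2 * (intDist (y j)) ^ 2) := by rw [← Finset.sum_sub_distrib]
        _ ≤ ∑ j, Real.cos (2 * π * y j) := Finset.sum_le_sum fun j _ => cos_two_pi_ge (y j)
    have hn1 : (0:ℝ) < (1:ℝ)/n := by positivity
    calc 1 - A / k = (1/n) * ((n:ℝ) - 2 * π ^ 2 * ∑ j, (intDist (y j)) ^ 2) := by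
          rw [hAk]; field_simp
      _ ≤ (1 / n) * ∑ j, Real.cos (2 * π * y j) :=
          mul_le_mul_of_nonneg_left hcos (le_of_lt hn1)
  have hAk3 : 0 ≤ 1 - A / k := by linarith
  have hber : 1 - A ≤ (1 - A / k) ^ k := by
    have hb := one_add_mul_le_pow (a := -(A/k)) (by linarith : (-2:ℝ) ≤ -(A/k)) k
    have he : 1 + (k:ℝ) * (-(A/k)) = 1 - A := by field_simp; ring
    calc 1 - A = 1 + (k:ℝ) * (-(A/k)) := he.symm
      _ ≤ (1 + -(A/k)) ^ k := hb
      _ = (1 - A/k) ^ k := by ring_nf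
  have hmono : (1 - A / k) ^ k ≤ ((1 / n) * ∑ j, Real.cos (2 * π * y j)) ^ k :=
    pow_le_pow_left₀ hAk3 hbase k
  have : 1 - 2 * π ^ 2 / 25 ≤ 1 - A := by linarith
  linarith

/-- For any generators α_1,…,α_n ∈ 𝕋^d and any k ≥ 1, there is a nonzero h ∈ ℤ^d with
‖h‖_∞ ≤ (25kd)^(n/(2d)) such that (2π²k/n)·∑_j {h·α_j}² < 2π²/25 < 1, and hence
Q̂(h)^k ≥ 1 − 2π²/25. -/
theorem exists_good_frequency (n d : ℕ) (hn : 0 < n) (hd : 0 < d) (α : Fin n → Fin d → ℝ)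
    (k : ℕ) (hk : 1 ≤ k) :
    ∃ h : Fin d → ℤ, h ≠ 0 ∧ ‖h‖ ≤ ((25 * k * d : ℝ)) ^ ((n : ℝ) / (2 * d)) ∧
      (2 * π ^ 2 * k / n) * ∑ j, (intDist (∑ i, (h i : ℝ) * α j i)) ^ 2 < 2 * π ^ 2 / 25 ∧
      2 * π ^ 2 / 25 < 1 ∧
      (((1 : ℝ) / n) * ∑ j, Real.cos (2 * π * ∑ i, (h i : ℝ) * α j i)) ^ k ≥
        1 - 2 * π ^ 2 / 25 := by
  have hk0 : (1:ℝ) ≤ (k:ℝ) := by exact_mod_cast hk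
  have hn0 : (1:ℝ) ≤ (n:ℝ) := by exact_mod_cast hn
  have hd0 : (1:ℝ) ≤ (d:ℝ) := by exact_mod_cast hd
  have hπ : 0 < π := Real.pi_pos
  -- basic numbers
  set K : ℝ := 25 * k * d with hK
  have hK25 : (25:ℝ) ≤ K := by
    calc (25:ℝ) = 25 * 1 * 1 := by norm_num
      _ ≤ K := by rw [hK]; gcongr
  have hK0 : (0:ℝ) ≤ K := by linarith
  have hK1 : (1:ℝ) ≤ K := by linarith
  set X : ℝ := K ^ ((n : ℝ) / (2 * d)) with hX
  have hexp0 : (0:ℝ) ≤ (n : ℝ) / (2 * d) := by positivity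
  have hX1 : 1 ≤ X := Real.one_le_rpow hK1 hexp0
  have hX0 : 0 ≤ X := by linarith
  have hsqk : 1 ≤ Real.sqrt k := Real.one_le_sqrt.mpr hk0
  set ε : ℝ := 1 / (5 * Real.sqrt k) with hε
  have hε0 : 0 < ε := by positivity
  have hε1 : ε ≤ 1 := by
    rw [hε, div_le_one (by positivity)]; linarith
  have hs : 0 < ε / 2 := by linarith
  have hs2 : ε / 2 ≤ 1 / 2 := by linarith
  have h2s : 2 * (ε / 2) = ε := by ring
  have hεsq : (ε:ℝ)^2 = 1 / (25 * k) := by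
    rw [hε]; rw [div_pow]; rw [mul_pow]
    rw [Real.sq_sqrt (by positivity : (0:ℝ) ≤ (k:ℝ))]; norm_num
  set M : ℕ := ⌊X⌋₊ with hM
  have hMX : X < (M : ℝ) + 1 := Nat.lt_floor_add_one X
  have hMle : (M : ℝ) ≤ X := Nat.floor_le hX0
  -- the family of sets
  set β : (Fin d → Fin (M + 1)) → Fin n → ℝ :=
    fun ix j => ∑ i, ((ix i : ℕ) : ℝ) * α j i with hβ
  set T : (Fin d → Fin (M + 1)) → Set (Fin n → ℝ) :=
    fun ix => Set.pi Set.univ fun j => Fset (ε / 2) (β ix j) with hT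
  have hTmeas : ∀ ix, MeasurableSet (T ix) :=
    fun ix => MeasurableSet.univ_pi fun j => measurableSet_Fset _ _
  set U : Set (Fin n → ℝ) := Set.pi Set.univ fun _ => Ico (0:ℝ) 1 with hU
  have hUmeas : MeasurableSet U := MeasurableSet.univ_pi fun _ => measurableSet_Ico
  have hTU : ∀ ix, T ix ⊆ U := by
    intro ix x hx j hj
    exact Fset_subset_Ico hs hs2 _ (hx j hj)
  set μ := MeasureTheory.volume.restrict U with hμ
  have hμuniv : μ Set.univ = 1 := by
    rw [hμ, MeasureTheory.Measure.restrict_apply_univ, hU, MeasureTheory.volume_pi_pi]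
    simp [Real.volume_Ico]
  have hμT : ∀ ix, μ (T ix) = ENNReal.ofReal ε ^ n := by
    intro ix
    rw [hμ, MeasureTheory.Measure.restrict_apply (hTmeas ix),
      Set.inter_eq_self_of_subset_left (hTU ix), hT]
    rw [MeasureTheory.volume_pi_pi]
    simp only [volume_Fset hs hs2, h2s]
    rw [Finset.prod_const, Finset.card_univ, Fintype.card_fin]
  -- the counting inequality
  have hreal : (1:ℝ) < ((M:ℝ) + 1) ^ d * ε ^ n := by
    have hXd : X ^ d * ε ^ n ≥ 1 := by
      have e1 : X ^ d = K ^ ((n : ℝ) / 2) := by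
        rw [hX, ← Real.rpow_natCast (K ^ ((n : ℝ) / (2 * d))) d, ← Real.rpow_mul hK0]
        congr 1
        have : (d:ℝ) ≠ 0 := by linarith
        field_simp
      have e2 : K ^ ((n : ℝ) / 2) = (Real.sqrt K) ^ n := by
        rw [Real.sqrt_eq_rpow, ← Real.rpow_natCast (K ^ ((1:ℝ)/2)) n, ← Real.rpow_mul hK0]
        congr 1; ring
      rw [e1, e2, ← mul_pow]
      have hbase : 1 ≤ Real.sqrt K * ε := by
        have hs1 : Real.sqrt (25 * k) ≤ Real.sqrt K := by
          apply Real.sqrt_le_sqrt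
          rw [hK]
          nlinarith
        have hs2' : Real.sqrt (25 * k) = 5 * Real.sqrt k := by
          rw [Real.sqrt_mul (by norm_num : (0:ℝ) ≤ 25)]
          congr 1
          rw [show (25:ℝ) = 5^2 by norm_num, Real.sqrt_sq (by norm_num : (0:ℝ) ≤ 5)]
        have h5k : (0:ℝ) < 5 * Real.sqrt k := by positivity
        calc (1:ℝ) = (5 * Real.sqrt k) * ε := by rw [hε]; field_simp
          _ ≤ Real.sqrt K * ε := by
            apply mul_le_mul_of_nonneg_right _ (le_of_lt hε0)
            rw [← hs2']; exact hs1
      calc (1:ℝ) = 1 ^ n := (one_pow n).symm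
        _ ≤ (Real.sqrt K * ε) ^ n := pow_le_pow_left₀ (by norm_num) hbase n
    have hpowlt : X ^ d < ((M:ℝ) + 1) ^ d := by
      apply pow_lt_pow_left₀ hMX hX0
      omega
    have hεn : (0:ℝ) < ε ^ n := by positivity
    nlinarith [pow_nonneg hX0 d]
  -- transfer to ENNReal and apply the pigeonhole principle
  have hsumeq : ∑' ix : Fin d → Fin (M + 1), μ (T ix)
      = (((M+1)^d : ℕ) : ENNReal) * ENNReal.ofReal ε ^ n := by
    rw [tsum_fintype]
    simp only [hμT, Finset.sum_const, Finset.card_univ, Fintype.card_pi, Fintype.card_fin,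
      Finset.prod_const, nsmul_eq_mul]
  have hkey : (1 : ENNReal) < (((M+1)^d : ℕ) : ENNReal) * ENNReal.ofReal ε ^ n := by
    rw [← ENNReal.ofReal_pow (le_of_lt hε0), ← ENNReal.ofReal_natCast ((M+1)^d),
      ← ENNReal.ofReal_mul (Nat.cast_nonneg _), ← ENNReal.ofReal_one,
      ENNReal.ofReal_lt_ofReal_iff (by push_cast; positivity)]
    push_cast
    convert hreal using 2
  have hsum : μ Set.univ < ∑' ix : Fin d → Fin (M + 1), μ (T ix) := by
    rw [hμuniv, hsumeq]; exact hkey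
  obtain ⟨ix, ix', hne, x, hx1, hx2⟩ :=
    MeasureTheory.exists_nonempty_inter_of_measure_univ_lt_tsum_measure
      μ (fun ix => (hTmeas ix).nullMeasurableSet) hsum
  set h : Fin d → ℤ := fun i => ((ix i : ℕ) : ℤ) - ((ix' i : ℕ) : ℤ) with hh
  have hh0 : h ≠ 0 := by
    intro hcon
    apply hne
    funext i
    have := congrFun hcon i
    simp only [hh, Pi.zero_apply, sub_eq_zero] at this
    exact Fin.ext (by exact_mod_cast this)
  have hhnorm : ‖h‖ ≤ X := by
    rw [pi_norm_le_iff_of_nonneg hX0]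
    intro i
    rw [Int.norm_eq_abs]
    have b1 : ((ix i : ℕ) : ℤ) ≤ (M : ℤ) := by exact_mod_cast Fin.is_le (ix i)
    have b2 : ((ix' i : ℕ) : ℤ) ≤ (M : ℤ) := by exact_mod_cast Fin.is_le (ix' i)
    have b3 : (0:ℤ) ≤ ((ix i : ℕ) : ℤ) := by positivity
    have b4 : (0:ℤ) ≤ ((ix' i : ℕ) : ℤ) := by positivity
    have : |h i| ≤ (M : ℤ) := by
      have : h i = ((ix i : ℕ) : ℤ) - ((ix' i : ℕ) : ℤ) := rfl
      rw [this, abs_le]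
      omega
    calc |(h i : ℝ)| ≤ ((M : ℤ) : ℝ) := by exact_mod_cast abs_le.mpr (abs_le.mp this)
      _ ≤ X := by exact_mod_cast hMle
  have hDlt : ∀ j, intDist (∑ i, (h i : ℝ) * α j i) < ε := by
    intro j
    have hsplit : ∑ i, (h i : ℝ) * α j i = β ix j - β ix' j := by
      rw [hβ, ← Finset.sum_sub_distrib]
      apply Finset.sum_congr rfl
      intro i _
      rw [hh]
      push_cast
      ring
    have f1 : intDist (x j - β ix j) < ε/2 := mem_Fset_intDist hs hs2 (hx1 j (Set.mem_univ j))
    have f2 : intDist (x j - β ix' j) < ε/2 := mem_Fset_intDist hs hs2 (hx2 j (Set.mem_univ j))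
    calc intDist (∑ i, (h i : ℝ) * α j i)
        = intDist (-(x j - β ix j) + (x j - β ix' j)) := by
          rw [hsplit]; congr 1; ring
      _ ≤ intDist (-(x j - β ix j)) + intDist (x j - β ix' j) := intDist_add_le _ _
      _ = intDist (x j - β ix j) + intDist (x j - β ix' j) := by rw [intDist_neg]
      _ < ε/2 + ε/2 := add_lt_add f1 f2
      _ = ε := by ring
  obtain ⟨c1, c2, c3⟩ := tail_lemma n k hn hk
    (fun j => ∑ i, (h i : ℝ) * α j i) (fun j => hDlt j)
  exact ⟨h, hh0, hhnorm, c1, c2, c3⟩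
end

section
/- For any probability measure P on the d-torus and any nonzero h = (h₁,…,h_d) ∈ ℤ^d, the discrepancy of P from Haar measure satisfies D(P) ≥ |P̂(h)| · ∏_{i=1}^d c_i, where c_i = 1/(π|h_i|) if h_i ≠ 0 and c_i = 1/π if h_i = 0. -/
open MeasureTheory Real

/-- The d-dimensional torus. -/
abbrev Torus (d : ℕ) := Fin d → UnitAddCircle

/-- A circular arc: the image in the circle of `[a, b)`. -/
noncomputable def arcSet (a b : ℝ) : Set UnitAddCircle :=
  (fun x : ℝ => (x : UnitAddCircle)) '' Set.Ico a b

/-- A box in the torus with sides `[a i, b i)`. -/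
noncomputable def box {d : ℕ} (a b : Fin d → ℝ) : Set (Torus d) :=
  Set.univ.pi fun i => arcSet (a i) (b i)

/-- Discrepancy of a measure from Haar (volume) measure over boxes. -/
noncomputable def disc {d : ℕ} (P : Measure (Torus d)) : ℝ :=
  ⨆ a : Fin d → ℝ, ⨆ b : Fin d → ℝ,
    |(P (box a b)).toReal - (volume (box a b)).toReal|

/-- Fourier transform of a measure on the torus at frequency h ∈ ℤ^d. -/
noncomputable def fourierTransform {d : ℕ} (P : Measure (Torus d)) (h : Fin d → ℤ) : ℂ :=
  ∫ x, (∏ i, fourier (h i) (x i)) ∂P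

/-! ### Auxiliary material for the proof -/

open Set

section Rep

/-- The canonical representative in `[0,1)` of a point of the unit circle. -/
noncomputable def rep (x : UnitAddCircle) : ℝ := ((AddCircle.equivIco 1 0 x) : ℝ)

lemma rep_mem (x : UnitAddCircle) : rep x ∈ Set.Ico (0:ℝ) 1 := by
  have := (AddCircle.equivIco 1 0 x).2; simpa [rep] using this

lemma coe_rep (x : UnitAddCircle) : ((rep x : ℝ) : UnitAddCircle) = x :=
  (AddCircle.equivIco 1 0).symm_apply_apply x

lemma rep_coe (s : ℝ) : rep (s : UnitAddCircle) = Int.fract s := by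
  have := AddCircle.coe_equivIco_mk_apply (p := (1:ℝ)) s
  simpa [rep] using this

lemma measurable_rep : Measurable rep :=
  measurable_subtype_coe.comp (AddCircle.measurableEquivIco 1 0).measurable

instance : IsProbabilityMeasure (volume : Measure UnitAddCircle) := ⟨UnitAddCircle.measure_univ⟩

instance (d : ℕ) : IsProbabilityMeasure (volume : Measure (Torus d)) := by
  rw [MeasureTheory.volume_pi]; infer_instance

lemma mem_arcSet_iff {a r : ℝ} (hr : r ≤ 1) {x : UnitAddCircle} :
    x ∈ arcSet a (a + r) ↔ rep (x - (a : ℝ)) < r := by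
  obtain ⟨hu0, hu1⟩ := rep_mem (x - (a : ℝ))
  set u := rep (x - (a : ℝ)) with hu
  have hcu : ((u : ℝ) : UnitAddCircle) = x - (a : ℝ) := coe_rep _
  have hxu : x = ((a + u : ℝ) : UnitAddCircle) := by
    rw [AddCircle.coe_add, hcu]; abel
  constructor
  · rintro ⟨s, hs, hsx⟩
    have hz : ((s - (a + u) : ℝ) : UnitAddCircle) = 0 := by
      rw [AddCircle.coe_sub, ← hxu]
      simp only [sub_eq_zero]
      exact hsx
    obtain ⟨n, hn⟩ := (AddCircle.coe_eq_zero_iff _).mp hz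
    have hns : (n : ℝ) = s - (a + u) := by simpa using hn
    have hs1 : a ≤ s := hs.1
    have hs2 : s < a + r := hs.2
    have h1 : (-1 : ℝ) < (n:ℝ) := by linarith
    have h2 : (n : ℝ) < 1 := by linarith
    have hn0 : n = 0 := by
      have a1 : (-1 : ℤ) < n := by exact_mod_cast h1
      have a2 : n < (1 : ℤ) := by exact_mod_cast h2
      omega
    rw [hn0] at hns
    push_cast at hns
    linarith
  · intro h
    refine ⟨a + u, ⟨by linarith, by linarith⟩, hxu.symm⟩

end Rep

section OneDim

/-- The Fourier coefficient of the arc `[0, r)` at frequency `h`. -/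
noncomputable def cc (h : ℤ) (r : ℝ) : ℂ :=
  if h = 0 then (r : ℂ)
  else (1 - Complex.exp (-(2 * π * Complex.I * h * r))) / (2 * π * Complex.I * h)

lemma fourier_eq_exp (h : ℤ) (t : ℝ) :
    fourier h (t : UnitAddCircle) = Complex.exp ((2 * π * Complex.I * h) * t) := by
  rw [fourier_coe_apply]
  norm_num

lemma stepA (h : ℤ) {r : ℝ} (hr0 : 0 < r) (hr1 : r ≤ 1) (x : UnitAddCircle) :
    ∫ t : UnitAddCircle, fourier h t * (if rep (x - t) < r then (1:ℂ) else 0)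
      = fourier h x * cc h r := by
  set x0 := rep x with hx0
  rw [← UnitAddCircle.integral_preimage (x0 - 1)
      (fun t => fourier h t * (if rep (x - t) < r then (1:ℂ) else 0))]
  have h1 : x0 - 1 + 1 = x0 := by ring
  rw [h1]
  have key : ∀ t ∈ Set.Ioc (x0 - 1) x0,
      fourier h (t : UnitAddCircle) * (if rep (x - (t:ℝ)) < r then (1:ℂ) else 0)
        = Set.indicator (Set.Ioc (x0 - r) x0) (fun t : ℝ => fourier h (t : UnitAddCircle)) t := by
    intro t ht
    have hx : x - ((t:ℝ) : UnitAddCircle) = ((x0 - t : ℝ) : UnitAddCircle) := by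
      rw [AddCircle.coe_sub, hx0, coe_rep]
    rw [hx, rep_coe]
    have hf : Int.fract (x0 - t) = x0 - t := by
      rw [Int.fract_eq_self]
      constructor
      · linarith [ht.2]
      · linarith [ht.1]
    rw [hf]
    by_cases hc : x0 - t < r
    · rw [if_pos hc, Set.indicator_of_mem (show t ∈ Set.Ioc (x0-r) x0 from ⟨by linarith, ht.2⟩)
        (fun t : ℝ => fourier h (t : UnitAddCircle)), mul_one]
    · rw [if_neg hc, Set.indicator_of_notMem
        (fun hm : t ∈ Set.Ioc (x0-r) x0 => hc (by linarith [hm.1]))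
        (fun t : ℝ => fourier h (t : UnitAddCircle)), mul_zero]
  rw [setIntegral_congr_fun measurableSet_Ioc key]
  rw [setIntegral_indicator measurableSet_Ioc]
  have hinter : Set.Ioc (x0 - 1) x0 ∩ Set.Ioc (x0 - r) x0 = Set.Ioc (x0 - r) x0 :=
    Set.inter_eq_self_of_subset_right (Set.Ioc_subset_Ioc_left (by linarith))
  rw [hinter, ← intervalIntegral.integral_of_le (by linarith : x0 - r ≤ x0)]
  rcases eq_or_ne h 0 with h0 | h0
  · subst h0
    simp only [fourier_zero, one_mul, cc, if_pos rfl]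
    rw [intervalIntegral.integral_const]
    simp [Complex.real_smul]
  · have hc : (2 * (π:ℂ) * Complex.I * (h:ℂ)) ≠ 0 := by
      refine mul_ne_zero (mul_ne_zero (mul_ne_zero two_ne_zero ?_) Complex.I_ne_zero) ?_
      · exact_mod_cast Complex.ofReal_ne_zero.mpr Real.pi_ne_zero
      · exact_mod_cast h0
    simp_rw [fourier_eq_exp]
    rw [integral_exp_mul_complex hc]
    have hxx : fourier h x = Complex.exp ((2 * π * Complex.I * h) * x0) := by
      rw [← coe_rep x, ← hx0, fourier_eq_exp]
    rw [hxx, cc, if_neg h0]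
    have hsplit : Complex.exp ((2 * π * Complex.I * h) * ((x0 - r : ℝ) : ℂ))
        = Complex.exp ((2 * π * Complex.I * h) * x0)
          * Complex.exp (-(2 * π * Complex.I * h * r)) := by
      rw [← Complex.exp_add]
      push_cast
      ring_nf
    rw [hsplit]
    field_simp

lemma integral_fourier_eq_zero {n : ℤ} (hn : n ≠ 0) :
    ∫ s : UnitAddCircle, fourier n s = 0 := by
  rw [← UnitAddCircle.integral_preimage 0 (fun s => fourier n s), zero_add]
  rw [← intervalIntegral.integral_of_le zero_le_one]
  simp_rw [fourier_eq_exp]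
  have hc : (2 * (π:ℂ) * Complex.I * (n:ℂ)) ≠ 0 := by
    refine mul_ne_zero (mul_ne_zero (mul_ne_zero two_ne_zero ?_) Complex.I_ne_zero) ?_
    · exact_mod_cast Complex.ofReal_ne_zero.mpr Real.pi_ne_zero
    · exact_mod_cast hn
  rw [integral_exp_mul_complex hc]
  have h1 : (2 * (π:ℂ) * Complex.I * (n:ℂ)) * ((1:ℝ):ℂ) = (n:ℂ) * (2 * π * Complex.I) := by
    push_cast; ring
  have h0 : (2 * (π:ℂ) * Complex.I * (n:ℂ)) * ((0:ℝ):ℂ) = 0 := by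
    push_cast; ring
  rw [h1, h0, Complex.exp_int_mul_two_pi_mul_I, Complex.exp_zero, sub_self, zero_div]

end OneDim

section Key

variable {d : ℕ} (h : Fin d → ℤ) (r : Fin d → ℝ)

/-- The box anchored at (the representatives of) `t` with side lengths `r`. -/
noncomputable def boxOf (t : Torus d) : Set (Torus d) :=
  box (fun i => rep (t i)) (fun i => rep (t i) + r i)

lemma mem_boxOf (hr1 : ∀ i, r i ≤ 1) (t x : Torus d) :
    x ∈ boxOf r t ↔ ∀ i, rep (x i - t i) < r i := by
  unfold boxOf box
  rw [Set.mem_univ_pi]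
  refine forall_congr' fun i => ?_
  rw [mem_arcSet_iff (hr1 i), coe_rep]

lemma measurableSet_boxOf (hr1 : ∀ i, r i ≤ 1) (t : Torus d) :
    MeasurableSet (boxOf r t) := by
  have : boxOf r t = ⋂ i, (fun x : Torus d => rep (x i - t i)) ⁻¹' Set.Iio (r i) := by
    ext x
    simp [mem_boxOf r hr1 t x]
  rw [this]
  exact MeasurableSet.iInter fun i =>
    (measurable_rep.comp ((measurable_pi_apply i).sub measurable_const)) measurableSet_Iio

/-- The averaging kernel. -/
noncomputable def kerF (p : Torus d × Torus d) : ℂ :=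
  ∏ i, (fourier (h i) (p.2 i) * (if rep (p.1 i - p.2 i) < r i then (1:ℂ) else 0))

lemma measurable_kerF : Measurable (kerF h r) := by
  refine Finset.measurable_prod _ fun i _ => Measurable.mul ?_ ?_
  · exact (map_continuous (fourier (h i))).measurable.comp
      ((measurable_pi_apply i).comp measurable_snd)
  · refine Measurable.ite ?_ measurable_const measurable_const
    exact (measurable_rep.comp
      (((measurable_pi_apply i).comp measurable_fst).sub
        ((measurable_pi_apply i).comp measurable_snd))) measurableSet_Iio

lemma norm_kerF_le (p : Torus d × Torus d) : ‖kerF h r p‖ ≤ 1 := by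
  unfold kerF
  rw [norm_prod]
  refine Finset.prod_le_one (fun i _ => norm_nonneg _) fun i _ => ?_
  rw [norm_mul]
  have h1 : ‖fourier (h i) (p.2 i)‖ = 1 := Circle.norm_coe _
  rw [h1, one_mul]
  split <;> simp

lemma integrable_kerF (Q : Measure (Torus d)) [IsProbabilityMeasure Q] :
    Integrable (kerF h r) (Q.prod volume) := by
  refine Integrable.mono' (integrable_const 1) (measurable_kerF h r).aestronglyMeasurable ?_
  exact Filter.Eventually.of_forall (norm_kerF_le h r)

lemma inner_x (hr1 : ∀ i, r i ≤ 1) (Q : Measure (Torus d)) [IsProbabilityMeasure Q]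
    (t : Torus d) :
    ∫ x, kerF h r (x, t) ∂Q
      = (∏ i, fourier (h i) (t i)) * ((Q (boxOf r t)).toReal : ℂ) := by
  have heq : ∀ x : Torus d, kerF h r (x, t)
      = (∏ i, fourier (h i) (t i)) * Set.indicator (boxOf r t) (fun _ => (1:ℂ)) x := by
    intro x
    classical
    unfold kerF
    rw [Finset.prod_mul_distrib]
    congr 1
    rw [Set.indicator_apply]
    by_cases hall : ∀ i, rep (x i - t i) < r i
    · rw [if_pos ((mem_boxOf r hr1 t x).mpr hall)]
      exact Finset.prod_eq_one fun i _ => if_pos (hall i)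
    · rw [if_neg (fun hm => hall ((mem_boxOf r hr1 t x).mp hm))]
      push_neg at hall
      obtain ⟨i, hi⟩ := hall
      exact Finset.prod_eq_zero (Finset.mem_univ i) (if_neg (not_lt.mpr hi))
  simp_rw [heq]
  rw [integral_const_mul, integral_indicator_const (1:ℂ) (measurableSet_boxOf r hr1 t)]
  simp [Complex.real_smul, Measure.real]

lemma inner_t (hr0 : ∀ i, 0 < r i) (hr1 : ∀ i, r i ≤ 1) (x : Torus d) :
    ∫ t : Torus d, kerF h r (x, t)
      = (∏ i, fourier (h i) (x i)) * ∏ i, cc (h i) (r i) := by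
  unfold kerF
  dsimp only
  rw [MeasureTheory.volume_pi]
  rw [MeasureTheory.integral_fintype_prod_eq_prod (ι := Fin d)
    (f := fun i s => fourier (h i) s * (if rep (x i - s) < r i then (1:ℂ) else 0))]
  rw [← Finset.prod_mul_distrib]
  exact Finset.prod_congr rfl fun i _ => stepA (h i) (hr0 i) (hr1 i) (x i)

lemma key_identity (hr0 : ∀ i, 0 < r i) (hr1 : ∀ i, r i ≤ 1)
    (Q : Measure (Torus d)) [IsProbabilityMeasure Q] :
    ∫ t : Torus d, (∏ i, fourier (h i) (t i)) * ((Q (boxOf r t)).toReal : ℂ)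
      = fourierTransform Q h * ∏ i, cc (h i) (r i) := by
  have swap := MeasureTheory.integral_integral_swap (f := fun x t => kerF h r (x, t))
    (integrable_kerF h r Q)
  calc ∫ t : Torus d, (∏ i, fourier (h i) (t i)) * ((Q (boxOf r t)).toReal : ℂ)
      = ∫ t : Torus d, ∫ x, kerF h r (x, t) ∂Q :=
        integral_congr_ae (Filter.Eventually.of_forall fun t => (inner_x h r hr1 Q t).symm)
    _ = ∫ x, (∫ t : Torus d, kerF h r (x, t)) ∂Q := swap.symm
    _ = ∫ x, ((∏ i, fourier (h i) (x i)) * ∏ i, cc (h i) (r i)) ∂Q :=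
        integral_congr_ae (Filter.Eventually.of_forall fun x => inner_t h r hr0 hr1 x)
    _ = fourierTransform Q h * ∏ i, cc (h i) (r i) := by
        rw [integral_mul_const]; rfl

lemma integrable_phi_box (hr1 : ∀ i, r i ≤ 1)
    (Q : Measure (Torus d)) [IsProbabilityMeasure Q] :
    Integrable (fun t : Torus d =>
      (∏ i, fourier (h i) (t i)) * ((Q (boxOf r t)).toReal : ℂ)) volume := by
  have := (integrable_kerF h r Q).integral_prod_right
  exact this.congr (Filter.Eventually.of_forall fun t => inner_x h r hr1 Q t)

end Key

section Bounds

lemma prob_toReal_le_one {d : ℕ} (Q : Measure (Torus d)) [IsProbabilityMeasure Q]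
    (s : Set (Torus d)) : (Q s).toReal ≤ 1 := by
  have h1 : Q s ≤ 1 := prob_le_one
  have := ENNReal.toReal_mono ENNReal.one_ne_top h1
  simpa using this

lemma abs_le_disc {d : ℕ} (P : Measure (Torus d)) [IsProbabilityMeasure P] (a b : Fin d → ℝ) :
    |(P (box a b)).toReal - (volume (box a b)).toReal| ≤ disc P := by
  have hbd : ∀ a b : Fin d → ℝ, |(P (box a b)).toReal - (volume (box a b)).toReal| ≤ 1 := by
    intro a b
    rw [abs_sub_le_iff]
    constructor
    · have h1 := prob_toReal_le_one P (box a b)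
      have h2 := ENNReal.toReal_nonneg (a := volume (box a b))
      linarith
    · have h1 := prob_toReal_le_one volume (box a b)
      have h2 := ENNReal.toReal_nonneg (a := P (box a b))
      linarith
  calc |(P (box a b)).toReal - (volume (box a b)).toReal|
      ≤ ⨆ b : Fin d → ℝ, |(P (box a b)).toReal - (volume (box a b)).toReal| := by
        refine le_ciSup (f := fun b : Fin d → ℝ =>
          |(P (box a b)).toReal - (volume (box a b)).toReal|) ?_ b
        exact ⟨1, by rintro _ ⟨b', rfl⟩; exact hbd a b'⟩
    _ ≤ disc P := by
        refine le_ciSup (f := fun a : Fin d → ℝ => ⨆ b : Fin d → ℝ,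
          |(P (box a b)).toReal - (volume (box a b)).toReal|) ?_ a
        exact ⟨1, by rintro _ ⟨a', rfl⟩; exact ciSup_le fun b' => hbd a' b'⟩

lemma exp_term (n : ℤ) (hn : n ≠ 0) :
    Complex.exp (-(2 * π * Complex.I * n * ((1/(2*|(n:ℝ)|) : ℝ) : ℂ))) = -1 := by
  have hne : (n:ℝ) ≠ 0 := Int.cast_ne_zero.mpr hn
  have hs : (n:ℝ) * (1/(2*|(n:ℝ)|)) = 1/2 ∨ (n:ℝ) * (1/(2*|(n:ℝ)|)) = -(1/2) := by
    rcases lt_or_gt_of_ne hne with hlt | hgt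
    · right; rw [abs_of_neg hlt]; field_simp
    · left; rw [abs_of_pos hgt]; field_simp
  have hmain : ∀ s : ℝ, (n:ℝ) * (1/(2*|(n:ℝ)|)) = s →
      -(2 * (π:ℂ) * Complex.I * n * ((1/(2*|(n:ℝ)|) : ℝ) : ℂ))
        = -(2 * (π:ℂ) * Complex.I * (s:ℂ)) := by
    intro s hseq
    have h2 : ((n:ℂ)) * ((1/(2*|(n:ℝ)|) : ℝ) : ℂ) = (s : ℂ) := by
      exact_mod_cast congrArg (fun y : ℝ => (y : ℂ)) hseq
    calc -(2 * (π:ℂ) * Complex.I * n * ((1/(2*|(n:ℝ)|) : ℝ) : ℂ))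
        = -(2 * (π:ℂ) * Complex.I * ((n:ℂ) * ((1/(2*|(n:ℝ)|) : ℝ) : ℂ))) := by ring
      _ = -(2 * (π:ℂ) * Complex.I * (s:ℂ)) := by rw [h2]
  rcases hs with hs | hs
  · rw [hmain _ hs]
    have : -(2 * (π:ℂ) * Complex.I * (((1:ℝ)/2 : ℝ):ℂ)) = -((π:ℂ) * Complex.I) := by
      push_cast; ring
    rw [this, Complex.exp_neg, Complex.exp_pi_mul_I]
    norm_num
  · rw [hmain _ hs]
    have : -(2 * (π:ℂ) * Complex.I * ((-(1/2) : ℝ):ℂ)) = (π:ℂ) * Complex.I := by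
      push_cast; ring
    rw [this, Complex.exp_pi_mul_I]

lemma abs_cc_ne (n : ℤ) (hn : n ≠ 0) :
    ‖cc n (1/(2*|(n:ℝ)|))‖ = 1/(π * |(n:ℝ)|) := by
  rw [cc, if_neg hn, exp_term n hn]
  have h2 : (1 : ℂ) - (-1) = 2 := by norm_num
  rw [h2, norm_div]
  have hnum : ‖(2:ℂ)‖ = 2 := by norm_num
  have hden : ‖(2 * (π:ℂ) * Complex.I * (n:ℂ))‖ = 2 * π * |(n:ℝ)| := by
    rw [norm_mul, norm_mul, norm_mul]
    simp [abs_of_pos pi_pos]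
  rw [hnum, hden]
  have hne : |(n:ℝ)| ≠ 0 := abs_ne_zero.mpr (Int.cast_ne_zero.mpr hn)
  field_simp

end Bounds

/-- For any probability measure P on the d-torus and nonzero h ∈ ℤ^d,
D(P) ≥ |P̂(h)| · ∏_i c_i where c_i = 1/(π|h_i|) if h_i ≠ 0 and 1/π otherwise. -/
theorem discrepancy_fourier_lower_bound (d : ℕ) (P : Measure (Torus d))
    [IsProbabilityMeasure P] (h : Fin d → ℤ) (hh : h ≠ 0) :
    disc P ≥ ‖fourierTransform P h‖ *
      ∏ i, (if h i ≠ 0 then 1 / (π * |(h i : ℝ)|) else 1 / π) := by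
  classical
  set r : Fin d → ℝ := fun i => if h i = 0 then (1/2:ℝ) else 1/(2*|(h i : ℝ)|) with hrdef
  have hr0 : ∀ i, 0 < r i := by
    intro i
    by_cases hi : h i = 0
    · simp [hrdef, hi]
    · have : (0:ℝ) < |(h i : ℝ)| := abs_pos.mpr (Int.cast_ne_zero.mpr hi)
      simp only [hrdef, if_neg hi]
      positivity
  have hr1 : ∀ i, r i ≤ 1 := by
    intro i
    by_cases hi : h i = 0
    · simp [hrdef, hi]; norm_num
    · have h1 : (1:ℝ) ≤ |(h i : ℝ)| := by
        have := Int.one_le_abs (by exact_mod_cast hi : h i ≠ 0)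
        calc (1:ℝ) = ((1:ℤ):ℝ) := by norm_num
          _ ≤ ((|h i| : ℤ) : ℝ) := by exact_mod_cast this
          _ = |(h i : ℝ)| := by push_cast; ring
      simp only [hrdef, if_neg hi]
      rw [div_le_one (by linarith)]
      linarith
  have hP := key_identity h r hr0 hr1 P
  have hV := key_identity h r hr0 hr1 (volume : Measure (Torus d))
  have hV0 : fourierTransform (volume : Measure (Torus d)) h = 0 := by
    have heq : fourierTransform (volume : Measure (Torus d)) h
        = ∏ i, ∫ s : UnitAddCircle, fourier (h i) s :=
      MeasureTheory.integral_fintype_prod_eq_prod (ι := Fin d)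
        (f := fun i s => fourier (h i) s)
    obtain ⟨i0, hi0⟩ := Function.ne_iff.mp hh
    rw [heq]
    exact Finset.prod_eq_zero (Finset.mem_univ i0) (integral_fourier_eq_zero hi0)
  rw [hV0, zero_mul] at hV
  have hsub : ∫ t : Torus d, (∏ i, fourier (h i) (t i)) *
      (((P (boxOf r t)).toReal : ℂ) - ((volume (boxOf r t)).toReal : ℂ))
      = fourierTransform P h * ∏ i, cc (h i) (r i) := by
    simp_rw [mul_sub]
    rw [integral_sub (integrable_phi_box h r hr1 P)
      (integrable_phi_box h r hr1 (volume : Measure (Torus d))), hP, hV, sub_zero]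
  have hbound : ‖fourierTransform P h * ∏ i, cc (h i) (r i)‖ ≤ disc P := by
    rw [← hsub]
    calc ‖∫ t : Torus d, (∏ i, fourier (h i) (t i)) *
          (((P (boxOf r t)).toReal : ℂ) - ((volume (boxOf r t)).toReal : ℂ))‖
        ≤ ∫ t : Torus d, ‖(∏ i, fourier (h i) (t i)) *
          (((P (boxOf r t)).toReal : ℂ) - ((volume (boxOf r t)).toReal : ℂ))‖ :=
          norm_integral_le_integral_norm _
      _ ≤ ∫ _t : Torus d, disc P := by
          refine integral_mono ?_ (integrable_const _) ?_
          · refine Integrable.norm ?_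
            refine Integrable.congr ((integrable_phi_box h r hr1 P).sub
              (integrable_phi_box h r hr1 (volume : Measure (Torus d))))
              (Filter.Eventually.of_forall fun t => ?_)
            simp [mul_sub]
          · intro t
            show ‖(∏ i, fourier (h i) (t i)) *
              (((P (boxOf r t)).toReal : ℂ) - ((volume (boxOf r t)).toReal : ℂ))‖ ≤ disc P
            have hnorm1 : ‖∏ i, fourier (h i) (t i)‖ = 1 := by
              rw [norm_prod]
              exact Finset.prod_eq_one fun i _ => Circle.norm_coe _
            rw [norm_mul, hnorm1, one_mul]
            have hcast : (((P (boxOf r t)).toReal : ℂ) - ((volume (boxOf r t)).toReal : ℂ))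
                = (((P (boxOf r t)).toReal - (volume (boxOf r t)).toReal : ℝ) : ℂ) := by
              push_cast; ring
            rw [hcast, Complex.norm_real, Real.norm_eq_abs]
            exact abs_le_disc P _ _
      _ = disc P := by
          rw [integral_const]
          simp
  have hfac : ‖fourierTransform P h * ∏ i, cc (h i) (r i)‖
      = ‖fourierTransform P h‖ * ∏ i, ‖cc (h i) (r i)‖ := by
    rw [norm_mul]
    congr 1
    exact norm_prod _ _
  rw [ge_iff_le]
  calc ‖fourierTransform P h‖ *
        ∏ i, (if h i ≠ 0 then 1 / (π * |(h i : ℝ)|) else 1 / π)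
      ≤ ‖fourierTransform P h‖ * ∏ i, ‖cc (h i) (r i)‖ := by
        refine mul_le_mul_of_nonneg_left ?_ (norm_nonneg _)
        refine Finset.prod_le_prod (fun i _ => ?_) (fun i _ => ?_)
        · split <;> positivity
        · by_cases hi : h i = 0
          · simp only [hi, hrdef, if_pos, ne_eq, not_true_eq_false, if_neg, not_not]
            have hcc : ‖cc 0 ((1:ℝ)/2)‖ = 1/2 := by
              rw [cc, if_pos rfl, Complex.norm_real]
              norm_num
            rw [hcc]
            simp only [if_false]
            rw [div_le_div_iff₀ pi_pos (by norm_num : (0:ℝ) < 2)]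
            linarith [two_le_pi]
          · simp only [hrdef, if_neg hi, ne_eq, hi, not_false_eq_true, if_pos]
            rw [abs_cc_ne (h i) hi]
    _ = ‖fourierTransform P h * ∏ i, cc (h i) (r i)‖ := hfac.symm
    _ ≤ disc P := hbound
end
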